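/- arXiv:2112.13329 — 2 statements merged into one kernel-verified Lean document; each statement's English description precedes it below -/
import Mathlib

section
/- The cluster 𝒳-mutation preserves the log-canonical Poisson structure: if {X_i, X_j} = ε_{ij} X_i X_j for all i, j ∈ I, then the mutated variables X'_k = X_k⁻¹ and X'_i = X_i(1 + X_k^{−sgn(ε_{ik})})^{−ε_{ik}} (i ≠ k) satisfy {X'_i, X'_j} = ε'_{ij} X'_i X'_j, where ε' = μ_k(ε). -/
/-!
Write `ω(f, g) = {f, g} / (f g)` (`logBracket`) for units `f, g`. By the Leibniz rule `ω` is
biadditive in the multiplicative sense, so brackets of Laurent monomials are read off from the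
exponents. Put
`w = X_k` and `v = 1 + w`; since `{X_i, v} = {X_i, w}`, one has `ω(X_i, v) = ε_{ik} w / v`, while
`ω(w, v) = ω(v, v) = 0`. Every mutated variable is a monomial
`X'_i = X_i^{±1} w^{[ε_{ik}]_+} v^{-ε_{ik}}` (the sign being `-` exactly for `i = k`), and in the
bracket of two of them the non-monomial terms `± ε_{ik} ε_{jk} w / v` cancel, leaving
`±ε_{ij} + ε_{ik} [ε_{jk}]_+ - [ε_{ik}]_+ ε_{jk}`, which is the mutated matrix entry.
-/

section LogBracket

variable {F : Type*} [Field F]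

structure IsSkewBiderivation (P : F → F → F) : Prop where
  skew : ∀ f g, P f g = -P g f
  add_right : ∀ f g h, P f (g + h) = P f g + P f h
  leibniz_right : ∀ f g h, P f (g * h) = P f g * h + g * P f h

def logBracket (P : F → F → F) (f g : Fˣ) : F := P f g / (f * g)

theorem bracket_eq_logBracket_mul (P : F → F → F) (f g : Fˣ) :
    P f g = logBracket P f g * (f * g) :=
  (div_mul_cancel₀ _ (f * g).ne_zero).symm

namespace IsSkewBiderivation

variable {P : F → F → F}

theorem apply_one_right (hP : IsSkewBiderivation P) (f : F) : P f 1 = 0 := by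
  simpa using hP.leibniz_right f 1 1

theorem logBracket_comm (hP : IsSkewBiderivation P) (f g : Fˣ) :
    logBracket P g f = -logBracket P f g := by
  rw [logBracket, logBracket, hP.skew, mul_comm (g : F), neg_div]

theorem logBracket_self [CharZero F] (hP : IsSkewBiderivation P) (f : Fˣ) :
    logBracket P f f = 0 :=
  self_eq_neg.mp (hP.logBracket_comm f f)

theorem logBracket_mul_right (hP : IsSkewBiderivation P) (f g h : Fˣ) :
    logBracket P f (g * h) = logBracket P f g + logBracket P f h := by
  simp only [logBracket, Units.val_mul, hP.leibniz_right]
  field_simp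

theorem logBracket_mul_left (hP : IsSkewBiderivation P) (f g h : Fˣ) :
    logBracket P (f * g) h = logBracket P f h + logBracket P g h := by
  rw [hP.logBracket_comm, hP.logBracket_mul_right, neg_add, ← hP.logBracket_comm,
    ← hP.logBracket_comm]

theorem logBracket_zpow_right (hP : IsSkewBiderivation P) (f g : Fˣ) (n : ℤ) :
    logBracket P f (g ^ n) = n * logBracket P f g := by
  let ωf : Additive Fˣ →+ F :=
    AddMonoidHom.mk' (fun u ↦ logBracket P f u.toMul) (hP.logBracket_mul_right f)
  exact (map_zsmul ωf n (Additive.ofMul g)).trans (zsmul_eq_mul _ _)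

theorem logBracket_zpow_left (hP : IsSkewBiderivation P) (f g : Fˣ) (n : ℤ) :
    logBracket P (f ^ n) g = n * logBracket P f g := by
  rw [hP.logBracket_comm, hP.logBracket_zpow_right, hP.logBracket_comm g f, mul_neg]

theorem logBracket_eq_of_coe_eq_one_add (hP : IsSkewBiderivation P) {v w : Fˣ}
    (hv : (v : F) = 1 + w) (f : Fˣ) :
    logBracket P f v = logBracket P f w * (w / v) := by
  simp only [logBracket, hv, hP.add_right, hP.apply_one_right, zero_add]
  field_simp [hv ▸ v.ne_zero]

theorem logBracket_mul_zpow_mul_zpow [CharZero F] (hP : IsSkewBiderivation P) {v w : Fˣ}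
    (hv : (v : F) = 1 + w) {x y : Fˣ} {e f : ℤ}
    (hxw : logBracket P x w = e) (hyw : logBracket P y w = f) (a b : ℤ) :
    logBracket P (x * w ^ a * v ^ (-e)) (y * w ^ b * v ^ (-f)) =
      logBracket P x y + e * b - a * f := by
  have hxv := hP.logBracket_eq_of_coe_eq_one_add hv x
  have hwv := hP.logBracket_eq_of_coe_eq_one_add hv w
  have hvy : logBracket P v y = -(f * (w / v)) := by
    rw [hP.logBracket_comm, hP.logBracket_eq_of_coe_eq_one_add hv, hyw]
  have hwy : logBracket P w y = -f := by rw [hP.logBracket_comm, hyw]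
  have hvw : logBracket P v w = -logBracket P w v := hP.logBracket_comm w v
  simp only [hP.logBracket_mul_left, hP.logBracket_mul_right, hP.logBracket_zpow_left,
    hP.logBracket_zpow_right, hxv, hwv, hvw, hvy, hwy, hxw, hP.logBracket_self]
  push_cast
  ring

end IsSkewBiderivation

end LogBracket

theorem one_add_zpow_neg_sign_zpow_neg {K : Type*} [Field K] {y : K} (hy : y ≠ 0) (e : ℤ) :
    (1 + y ^ (-e.sign)) ^ (-e) = y ^ max e 0 * (1 + y) ^ (-e) := by
  rcases lt_trichotomy e 0 with he | rfl | he
  · simp [Int.sign_eq_neg_one_of_neg he, he.le]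
  · simp
  · have h : 1 + y⁻¹ = y⁻¹ * (1 + y) := by field_simp; ring
    simp [Int.sign_eq_one_of_pos he, he.le, h, mul_zpow]
    ring

theorem MvPolynomial.one_add_algebraMap_X_ne_zero {σ R : Type*} [Field R] (i : σ) :
    1 + algebraMap (MvPolynomial σ R) (FractionRing (MvPolynomial σ R)) (X i) ≠ 0 := by
  rw [← map_one (algebraMap (MvPolynomial σ R) _), ← map_add, ne_eq,
    IsFractionRing.to_map_eq_zero_iff]
  intro h
  simpa using congrArg constantCoeff h

theorem mutation_entry_eq {I : Type*} [DecidableEq I] {ε ε' : I → I → ℤ} {k : I}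
    (hskew : ∀ i j, ε i j = -ε j i)
    (hε' : ∀ i j, (ε' i j : ℚ) = if k = i ∨ k = j then -(ε i j : ℚ)
      else (ε i j : ℚ) +
        (1 / 2) * ((ε i k : ℚ) * |(ε k j : ℚ)| + |(ε i k : ℚ)| * (ε k j : ℚ)))
    (i j : I) :
    ε' i j = (if i = k then -1 else 1) * (if j = k then -1 else 1) * ε i j
      + ε i k * max (ε j k) 0 - max (ε i k) 0 * ε j k := by
  have hkk : ε k k = 0 := by linarith [hskew k k]
  qify
  rw [hε' i j]
  by_cases hi : i = k
  · subst hi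
    by_cases hj : j = i <;> simp [hj, hkk]
  by_cases hj : j = k
  · subst hj
    simp [hi, Ne.symm hi, hkk]
  rw [if_neg (by tauto), if_neg hi, if_neg hj, hskew k j]
  push_cast
  rcases le_total 0 (ε i k) with h₁ | h₁ <;> rcases le_total 0 (ε j k) with h₂ | h₂ <;>
    simp [abs_of_nonneg, abs_of_nonpos, h₁, h₂] <;> ring

theorem stmt11_general {I : Type*} [DecidableEq I]
    (ε ε' : I → I → ℤ) (k : I)
    (hskew : ∀ i j, ε i j = -ε j i)
    (hε' : ∀ i j, (ε' i j : ℚ) = if k = i ∨ k = j then -(ε i j : ℚ)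
      else (ε i j : ℚ) +
        (1 / 2) * ((ε i k : ℚ) * |(ε k j : ℚ)| + |(ε i k : ℚ)| * (ε k j : ℚ)))
    (X X' : I → FractionRing (MvPolynomial I ℚ))
    (hX : ∀ i, X i =
      algebraMap (MvPolynomial I ℚ) (FractionRing (MvPolynomial I ℚ))
        (MvPolynomial.X i))
    (hX' : ∀ i, X' i = if i = k then (X k)⁻¹
      else X i * (1 + X k ^ (-(ε i k).sign)) ^ (-(ε i k)))
    (P : FractionRing (MvPolynomial I ℚ) → FractionRing (MvPolynomial I ℚ) →
      FractionRing (MvPolynomial I ℚ))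
    (hadd₂ : ∀ f g h, P f (g + h) = P f g + P f h)
    (hanti : ∀ f g, P f g = -P g f)
    (hleib : ∀ f g h, P f (g * h) = P f g * h + g * P f h)
    (hbase : ∀ i j, P (X i) (X j) = ε i j • (X i * X j)) :
    ∀ i j, P (X' i) (X' j) = ε' i j • (X' i * X' j) := by
  have hP : IsSkewBiderivation P := ⟨hanti, hadd₂, hleib⟩
  have hkk : ε k k = 0 := by linarith [hskew k k]
  have hX0 (i : I) : X i ≠ 0 := by simp [hX, MvPolynomial.X_ne_zero]
  have hv0 : 1 + X k ≠ 0 := hX k ▸ MvPolynomial.one_add_algebraMap_X_ne_zero k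
  let x (i : I) := Units.mk0 (X i) (hX0 i)
  let v := Units.mk0 (1 + X k) hv0
  have hx (i j : I) : logBracket P (x i) (x j) = ε i j := by
    simp [logBracket, x, hbase, mul_div_cancel_right₀ _ (mul_ne_zero (hX0 i) (hX0 j))]
  have hX'_eq (i : I) : X' i =
      ↑(x i ^ (if i = k then -1 else 1 : ℤ) * x k ^ max (ε i k) 0 * v ^ (-ε i k)) := by
    by_cases hi : i = k
    · subst hi
      simp [x, hX', hkk]
    · rw [hX', if_neg hi, one_add_zpow_neg_sign_zpow_neg (hX0 k)]
      simp [x, v, hi, mul_assoc]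
  have hxk (i : I) :
      logBracket P (x i ^ (if i = k then -1 else 1 : ℤ)) (x k) = ε i k := by
    rw [hP.logBracket_zpow_left, hx]
    split_ifs with hi
    · simp [hi, hkk]
    · simp
  intro i j
  rw [hX'_eq i, hX'_eq j, bracket_eq_logBracket_mul P,
    hP.logBracket_mul_zpow_mul_zpow (by simp [v, x]) (hxk i) (hxk j),
    hP.logBracket_zpow_left, hP.logBracket_zpow_right, hx, zsmul_eq_mul,
    mutation_entry_eq hskew hε' i j]
  push_cast
  ring

/-- The cluster `𝒳`-mutation preserves the log-canonical Poisson structure: if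
`{X_i, X_j} = ε_{ij} X_i X_j`, then the mutated variables `X'_k = X_k⁻¹`,
`X'_i = X_i (1 + X_k^{−sgn ε_{ik}})^{−ε_{ik}}` (for `i ≠ k`) satisfy
`{X'_i, X'_j} = ε'_{ij} X'_i X'_j`, where `ε' = μ_k(ε)`. -/
theorem stmt11 {I : Type*} [Fintype I] [DecidableEq I]
    (ε ε' : I → I → ℤ) (k : I)
    (hskew : ∀ i j, ε i j = -ε j i)
    (hε' : ∀ i j, (ε' i j : ℚ) = if k = i ∨ k = j then -(ε i j : ℚ)
      else (ε i j : ℚ) +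
        (1 / 2) * ((ε i k : ℚ) * |(ε k j : ℚ)| + |(ε i k : ℚ)| * (ε k j : ℚ)))
    (X X' : I → FractionRing (MvPolynomial I ℚ))
    (hX : ∀ i, X i =
      algebraMap (MvPolynomial I ℚ) (FractionRing (MvPolynomial I ℚ))
        (MvPolynomial.X i))
    (hX' : ∀ i, X' i = if i = k then (X k)⁻¹
      else X i * (1 + X k ^ (-(ε i k).sign)) ^ (-(ε i k)))
    (P : FractionRing (MvPolynomial I ℚ) → FractionRing (MvPolynomial I ℚ) →
      FractionRing (MvPolynomial I ℚ))
    (hadd₁ : ∀ f g h, P (f + g) h = P f h + P g h)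
    (hadd₂ : ∀ f g h, P f (g + h) = P f g + P f h)
    (hanti : ∀ f g, P f g = -P g f)
    (hleib : ∀ f g h, P f (g * h) = P f g * h + g * P f h)
    (hbase : ∀ i j, P (X i) (X j) = ε i j • (X i * X j)) :
    ∀ i j, P (X' i) (X' j) = ε' i j • (X' i * X' j) :=
  stmt11_general ε ε' k hskew hε' X X' hX hX' P hadd₂ hanti hleib hbase
end

section
/- In the quantum torus with relations X̂_i X̂_j = q^{2ε_{ij}} X̂_j X̂_i, the elements Y_k := X̂_k⁻¹ and Y_i := q^{−ε_{ik}[ε_{ik}]_+} X̂_i X̂_k^{[ε_{ik}]_+} (for i ≠ k) satisfy the mutated quantum torus relations Y_i Y_j = q^{2ε'_{ij}} Y_j Y_i for all i, j ∈ I, where ε' = μ_k(ε). -/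
/-!
For central `q`, the exponent `c` in `a * b = q ^ c * (b * a)` is additive in each argument,
ℤ-linear under powers, and zero for powers of `q`: a bilinear form on monomials. Expanding `Y_i`
as a monomial in `X_i` and `X_k`, the exponent between `Y_i` and `Y_j` becomes
`2ε_ij + 2ε_ik [ε_jk]_+ + 2ε_kj [ε_ik]_+`, and `2[a]_+ = a + |a|` turns this into `2ε'_ij`.
-/

def QCommute {G : Type*} [Group G] (q : G) (c : ℤ) (a b : G) : Prop :=
  a * b = q ^ c * (b * a)

namespace QCommute

variable {G : Type*} [Group G] {q : G} {c d : ℤ} {a a' b : G}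

theorem refl (a : G) : QCommute q 0 a a := by
  rw [QCommute, zpow_zero, one_mul]

theorem zpow_left_of_central (hq : ∀ u, Commute q u) (e : ℤ) (b : G) : QCommute q 0 (q ^ e) b := by
  rw [QCommute, zpow_zero, one_mul]
  exact (hq b).zpow_left e

theorem symm (h : QCommute q c a b) : QCommute q (-c) b a := by
  rw [QCommute, h, ← mul_assoc, ← zpow_add, neg_add_cancel, zpow_zero, one_mul]

theorem mul_left (hq : ∀ u, Commute q u) (h : QCommute q c a b) (h' : QCommute q d a' b) :
    QCommute q (c + d) (a * a') b := by
  rw [QCommute] at *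
  rw [mul_assoc, h', ((hq a).zpow_left d).symm.left_comm, ← mul_assoc a, h, zpow_add]
  group

theorem zpow_right (hq : ∀ u, Commute q u) (h : QCommute q c a b) (n : ℤ) :
    QCommute q (c * n) a (b ^ n) := by
  have hsemi : SemiconjBy a (b ^ n) ((q ^ c * b) ^ n) :=
    SemiconjBy.zpow_right (by rw [SemiconjBy, h, mul_assoc]) n
  rw [((hq b).zpow_left c).mul_zpow, ← zpow_mul] at hsemi
  rw [QCommute, hsemi, mul_assoc]

theorem zpow_left (hq : ∀ u, Commute q u) (h : QCommute q c a b) (n : ℤ) :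
    QCommute q (c * n) (a ^ n) b := by
  simpa using (h.symm.zpow_right hq n).symm

theorem central_mul_mul_zpow_left (hq : ∀ u, Commute q u) {b v : G} (ha : QCommute q c a v)
    (hb : QCommute q d b v) (e m : ℤ) : QCommute q (c + d * m) (q ^ e * a * b ^ m) v := by
  simpa using ((zpow_left_of_central hq e v).mul_left hq ha).mul_left hq (hb.zpow_left hq m)

end QCommute

theorem two_mul_max_zero (a : ℤ) : 2 * max a 0 = a + |a| := by
  linarith [max_zero_add_max_neg_zero_eq_abs_self a, max_zero_sub_max_neg_zero_eq_self a]

section Mutation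

variable {I : Type*} [DecidableEq I] {ε ε' : I → I → ℤ} {k : I}

theorem mutation_eq_neg_of_mem
    (hε' : ∀ i j, (ε' i j : ℚ) = if k = i ∨ k = j then -(ε i j : ℚ)
      else (ε i j : ℚ) +
        (1 / 2) * ((ε i k : ℚ) * |(ε k j : ℚ)| + |(ε i k : ℚ)| * (ε k j : ℚ)))
    {i j : I} (h : k = i ∨ k = j) : ε' i j = -ε i j := by
  exact_mod_cast if_pos h ▸ hε' i j

theorem two_mul_mutation_eq_of_ne
    (hε' : ∀ i j, (ε' i j : ℚ) = if k = i ∨ k = j then -(ε i j : ℚ)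
      else (ε i j : ℚ) +
        (1 / 2) * ((ε i k : ℚ) * |(ε k j : ℚ)| + |(ε i k : ℚ)| * (ε k j : ℚ)))
    {i j : I} (hi : k ≠ i) (hj : k ≠ j) :
    2 * ε' i j = 2 * ε i j + ε i k * |ε k j| + |ε i k| * ε k j := by
  have h := hε' i j
  rw [if_neg (not_or.mpr ⟨hi, hj⟩)] at h
  qify
  rw [h]
  ring

end Mutation

section QuantumTorus

variable {G : Type*} [Group G] {q : G} {I : Type*} {ε : I → I → ℤ} {X Y : I → G} {k : I}

theorem qcommute_mutated_left (hq : ∀ u, Commute q u)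
    (hY : ∀ i, i ≠ k → Y i = q ^ (-(ε i k * max (ε i k) 0)) * X i * X k ^ max (ε i k) 0)
    {i : I} (hi : i ≠ k) {v : G} {c d : ℤ} (hiv : QCommute q c (X i) v)
    (hkv : QCommute q d (X k) v) : QCommute q (c + d * max (ε i k) 0) (Y i) v := by
  rw [hY i hi]
  exact hiv.central_mul_mul_zpow_left hq hkv _ _

theorem qcommute_mutated_inv (hq : ∀ u, Commute q u)
    (hrel : ∀ i j, QCommute q (2 * ε i j) (X i) (X j)) (hYk : Y k = (X k)⁻¹)
    (hY : ∀ i, i ≠ k → Y i = q ^ (-(ε i k * max (ε i k) 0)) * X i * X k ^ max (ε i k) 0)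
    {i : I} (hi : i ≠ k) : QCommute q (-(2 * ε i k)) (Y i) (Y k) := by
  have h := qcommute_mutated_left hq hY hi ((hrel i k).zpow_right hq (-1))
    ((QCommute.refl (X k)).zpow_right hq (-1))
  rwa [zpow_neg_one, ← hYk, mul_neg_one, zero_mul, zero_mul, add_zero] at h

theorem qcommute_mutated_mutated (hq : ∀ u, Commute q u) (hskew : ∀ i j, ε i j = -ε j i)
    (hrel : ∀ i j, QCommute q (2 * ε i j) (X i) (X j))
    (hY : ∀ i, i ≠ k → Y i = q ^ (-(ε i k * max (ε i k) 0)) * X i * X k ^ max (ε i k) 0)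
    {i j : I} (hi : i ≠ k) (hj : j ≠ k) :
    QCommute q (2 * ε i j + ε i k * |ε k j| + |ε i k| * ε k j) (Y i) (Y j) := by
  have h := qcommute_mutated_left hq hY hi
    (qcommute_mutated_left hq hY hj (hrel j i) (hrel k i)).symm
    (qcommute_mutated_left hq hY hj (hrel j k) (hrel k k)).symm
  convert h using 1
  have hkk : ε k k = 0 := by linarith [hskew k k]
  rw [hskew j i, hskew k i, hskew j k, hkk, ← abs_neg (ε k j)]
  linear_combination (-ε i k) * two_mul_max_zero (-ε k j) - ε k j * two_mul_max_zero (ε i k)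

end QuantumTorus

theorem stmt13_general {I : Type*} [DecidableEq I] {A : Type*} [Ring A]
    (q : Aˣ) (hq : ∀ u : Aˣ, q * u = u * q)
    (ε ε' : I → I → ℤ) (k : I)
    (hskew : ∀ i j, ε i j = -ε j i)
    (hε' : ∀ i j, (ε' i j : ℚ) = if k = i ∨ k = j then -(ε i j : ℚ)
      else (ε i j : ℚ) +
        (1 / 2) * ((ε i k : ℚ) * |(ε k j : ℚ)| + |(ε i k : ℚ)| * (ε k j : ℚ)))
    (X Y : I → Aˣ)
    (hrel : ∀ i j, X i * X j = q ^ (2 * ε i j) * (X j * X i))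
    (hYk : Y k = (X k)⁻¹)
    (hY : ∀ i, i ≠ k →
      Y i = q ^ (-(ε i k * max (ε i k) 0)) * X i * X k ^ max (ε i k) 0) :
    ∀ i j, Y i * Y j = q ^ (2 * ε' i j) * (Y j * Y i) := by
  have hqc : ∀ u, Commute q u := hq
  intro i j
  change QCommute q (2 * ε' i j) (Y i) (Y j)
  rcases eq_or_ne k i with rfl | hi <;> rcases eq_or_ne k j with rfl | hj
  · rw [mutation_eq_neg_of_mem hε' (.inl rfl), show ε k k = 0 by linarith [hskew k k]]
    exact QCommute.refl (Y k)
  · rw [mutation_eq_neg_of_mem hε' (.inl rfl), hskew k j, neg_neg]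
    simpa using (qcommute_mutated_inv hqc hrel hYk hY hj.symm).symm
  · rw [mutation_eq_neg_of_mem hε' (.inr rfl), mul_neg]
    exact qcommute_mutated_inv hqc hrel hYk hY hi.symm
  · rw [two_mul_mutation_eq_of_ne hε' hi hj]
    exact qcommute_mutated_mutated hqc hskew hrel hY hi.symm hj.symm

/-- In the quantum torus with relations `X̂_i X̂_j = q^{2ε_{ij}} X̂_j X̂_i`, the
elements `Y_k := X̂_k⁻¹` and `Y_i := q^{−ε_{ik}[ε_{ik}]_+} X̂_i X̂_k^{[ε_{ik}]_+}`
(for `i ≠ k`, with `[a]_+ = (a+|a|)/2 = max a 0`) satisfy the mutated quantum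
torus relations `Y_i Y_j = q^{2ε'_{ij}} Y_j Y_i`, where `ε' = μ_k(ε)`. -/
theorem stmt13 {I : Type*} [Fintype I] [DecidableEq I] {A : Type*} [Ring A]
    (q : Aˣ) (hq : ∀ u : Aˣ, q * u = u * q)
    (ε ε' : I → I → ℤ) (k : I)
    (hskew : ∀ i j, ε i j = -ε j i)
    (hε' : ∀ i j, (ε' i j : ℚ) = if k = i ∨ k = j then -(ε i j : ℚ)
      else (ε i j : ℚ) +
        (1 / 2) * ((ε i k : ℚ) * |(ε k j : ℚ)| + |(ε i k : ℚ)| * (ε k j : ℚ)))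
    (X Y : I → Aˣ)
    (hrel : ∀ i j, X i * X j = q ^ (2 * ε i j) * (X j * X i))
    (hYk : Y k = (X k)⁻¹)
    (hY : ∀ i, i ≠ k →
      Y i = q ^ (-(ε i k * max (ε i k) 0)) * X i * X k ^ max (ε i k) 0) :
    ∀ i j, Y i * Y j = q ^ (2 * ε' i j) * (Y j * Y i) :=
  stmt13_general q hq ε ε' k hskew hε' X Y hrel hYk hY
end
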